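/- arXiv:1308.0631 — 5 statements merged into one kernel-verified Lean document; each statement's English description precedes it below -/
import Mathlib

section
/- Let τ₁ and τ₂ be the integer matrices τ₁ = [[0,−1],[1,−1]] and τ₂ = [[−1,1],[0,1]], both of which lie in GL₂(ℤ). The subgroup of GL₂(ℤ) generated by {τ₁, τ₂} is isomorphic to the dihedral group of order 6. -/
/-!
`τ₁` has order 3 and `τ₂`, `τ₂ τ₁` are involutions, so the relations of the presentation
`⟨r, s | r³, s², (s r)²⟩` of the dihedral group of order 6 hold, and `r ↦ τ₁`, `s ↦ τ₂` defines a
homomorphism onto `⟨τ₁, τ₂⟩`. It is injective because `τ₁` has order exactly 3 and `τ₂`, having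
determinant `-1`, is not a power of `τ₁`.
-/

open Subgroup

namespace DihedralGroup

variable {n : ℕ} {G : Type*} [Group G] {a b : G}

def zmodPow (ha : a ^ n = 1) (i : ZMod n) : G :=
  Additive.toMul <| ZMod.lift n
    ⟨zmultiplesHom (Additive G) (Additive.ofMul a), by simpa using congrArg Additive.ofMul ha⟩ i

section zmodPow

variable (ha : a ^ n = 1)

@[simp]
theorem zmodPow_intCast (k : ℤ) : zmodPow ha k = a ^ k := by
  simp [zmodPow]

theorem zmodPow_add (i j : ZMod n) : zmodPow ha (i + j) = zmodPow ha i * zmodPow ha j := by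
  simp [zmodPow]

@[simp]
theorem zmodPow_zero : zmodPow ha 0 = 1 := by
  simp [zmodPow]

@[simp]
theorem zmodPow_one : zmodPow ha 1 = a := by
  simpa using zmodPow_intCast ha 1

theorem zmodPow_mem_zpowers (i : ZMod n) : zmodPow ha i ∈ zpowers a := by
  obtain ⟨k, rfl⟩ := ZMod.intCast_surjective i
  simp

theorem zmodPow_eq_one_iff (hn : orderOf a = n) {i : ZMod n} : zmodPow ha i = 1 ↔ i = 0 := by
  obtain ⟨k, rfl⟩ := ZMod.intCast_surjective i
  rw [zmodPow_intCast, ← orderOf_dvd_iff_zpow_eq_one, hn, ZMod.intCast_zmod_eq_zero_iff_dvd]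

theorem zmodPow_mul_eq_mul_zmodPow_neg (hb : b ^ 2 = 1) (hba : (b * a) ^ 2 = 1) (i : ZMod n) :
    zmodPow ha i * b = b * zmodPow ha (-i) := by
  have hb_inv : b⁻¹ = b := inv_eq_of_mul_eq_one_right (by rwa [← sq])
  have hconj : b⁻¹ * a * b⁻¹⁻¹ = a⁻¹ := by
    rw [inv_inv, hb_inv]
    exact eq_inv_of_mul_eq_one_left (by rwa [sq, ← mul_assoc] at hba)
  obtain ⟨k, rfl⟩ := ZMod.intCast_surjective i
  rw [← Int.cast_neg, zmodPow_intCast, zmodPow_intCast, zpow_neg, ← inv_zpow, ← hconj, conj_zpow]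
  group

end zmodPow

def lift (ha : a ^ n = 1) (hb : b ^ 2 = 1) (hba : (b * a) ^ 2 = 1) : DihedralGroup n →* G where
  toFun
    | r i => zmodPow ha i
    | sr i => b * zmodPow ha i
  map_one' := zmodPow_zero ha
  map_mul' := by
    have hb' : b * b = 1 := by rwa [← sq]
    have hcomm := zmodPow_mul_eq_mul_zmodPow_neg ha hb hba
    rintro (i | i) (j | j) <;> simp only [r_mul_r, r_mul_sr, sr_mul_r, sr_mul_sr]
    · exact zmodPow_add ha i j
    · rw [← mul_assoc, hcomm, mul_assoc, ← zmodPow_add, neg_add_eq_sub]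
    · rw [mul_assoc, zmodPow_add]
    · rw [mul_assoc, ← mul_assoc (zmodPow ha i), hcomm, ← mul_assoc, ← mul_assoc, hb', one_mul,
        ← zmodPow_add, neg_add_eq_sub]

section lift

variable (ha : a ^ n = 1) (hb : b ^ 2 = 1) (hba : (b * a) ^ 2 = 1)

@[simp]
theorem lift_r (i : ZMod n) : lift ha hb hba (r i) = zmodPow ha i := rfl

@[simp]
theorem lift_sr (i : ZMod n) : lift ha hb hba (sr i) = b * zmodPow ha i := rfl

theorem lift_injective (hn : orderOf a = n) (hb_not_mem : b ∉ zpowers a) :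
    Function.Injective (lift ha hb hba) := by
  rw [injective_iff_map_eq_one]
  rintro (i | i) h
  · rw [lift_r, zmodPow_eq_one_iff ha hn] at h
    rw [h, r_zero]
  · rw [lift_sr, mul_eq_one_iff_eq_inv] at h
    exact absurd (h ▸ inv_mem (zmodPow_mem_zpowers ha i)) hb_not_mem

theorem range_lift : (lift ha hb hba).range = closure {a, b} := by
  apply le_antisymm
  · have ha_mem : zpowers a ≤ closure {a, b} := zpowers_le.mpr (subset_closure (by simp))
    have hb_mem : b ∈ closure {a, b} := subset_closure (by simp)
    rintro _ ⟨i | i, rfl⟩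
    · exact ha_mem (zmodPow_mem_zpowers ha i)
    · exact mul_mem hb_mem (ha_mem (zmodPow_mem_zpowers ha i))
  · rw [closure_le]
    rintro _ (rfl | rfl)
    · exact ⟨r 1, zmodPow_one ha⟩
    · exact ⟨sr 0, by simp⟩

noncomputable def mulEquivClosure (hn : orderOf a = n) (hb_not_mem : b ∉ zpowers a) :
    DihedralGroup n ≃* closure {a, b} :=
  (MonoidHom.ofInjective (lift_injective ha hb hba hn hb_not_mem)).trans
    (MulEquiv.subgroupCongr (range_lift ha hb hba))

end lift

end DihedralGroup

/-- The subgroup of GL₂(ℤ) generated by τ₁ = [[0,−1],[1,−1]] and τ₂ = [[−1,1],[0,1]]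
is isomorphic to the dihedral group of order 6. -/
theorem stmt_0 (τ₁ τ₂ : GL (Fin 2) ℤ)
    (h₁ : (τ₁ : Matrix (Fin 2) (Fin 2) ℤ) = !![0, -1; 1, -1])
    (h₂ : (τ₂ : Matrix (Fin 2) (Fin 2) ℤ) = !![-1, 1; 0, 1]) :
    Nonempty ((Subgroup.closure {τ₁, τ₂} : Subgroup (GL (Fin 2) ℤ)) ≃* DihedralGroup 3) := by
  have hτ₁ : τ₁ ^ 3 = 1 := by ext : 1; push_cast [h₁]; decide
  have hτ₂ : τ₂ ^ 2 = 1 := by ext : 1; push_cast [h₂]; decide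
  have hτ₂τ₁ : (τ₂ * τ₁) ^ 2 = 1 := by ext : 1; push_cast [h₁, h₂]; decide
  have horder : orderOf τ₁ = 3 := by
    refine orderOf_eq_prime hτ₁ fun h => ?_
    have := congrArg (fun g : GL (Fin 2) ℤ => (g : Matrix (Fin 2) (Fin 2) ℤ) 0 0) h
    simp [h₁] at this
  have hτ₂_not_mem : τ₂ ∉ zpowers τ₁ := by
    have hdet₁ : Matrix.GeneralLinearGroup.det τ₁ = 1 := by ext; simp [h₁]
    have hdet₂ : Matrix.GeneralLinearGroup.det τ₂ ≠ 1 := by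
      intro h; have := congrArg Units.val h; simp [h₂] at this
    rintro ⟨k, rfl⟩
    simp [hdet₁] at hdet₂
  exact ⟨(DihedralGroup.mulEquivClosure hτ₁ hτ₂ hτ₂τ₁ horder hτ₂_not_mem).symm⟩
end

section
/- Let F be a field and let α₁, …, α₆ be nonzero elements of F. Then the following are equivalent: (i) for every permutation σ of {1,…,6} one has α_{σ(1)}α_{σ(2)}α_{σ(3)} = α_{σ(4)}α_{σ(5)}α_{σ(6)}; (ii) (α_i·α₁⁻¹)² = 1 for every i = 1,…,6 and ∏_{i=1}^{6} (α_i·α₁⁻¹) = 1. -/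
/-!
Both conditions are invariant under rescaling all `αᵢ` by a common nonzero factor, so one may
assume `α₀ = 1`. Exchanging an entry `x` of the first triple with an entry `y` of the second one
turns `x p = y q` into `y p = x q`; multiplying the two gives `x² = y²`, so all `αᵢ² = α₀² = 1`, and
then `∏ αᵢ = (α₀α₁α₂)² = 1`. Conversely, if all `αᵢ = ±1` and `∏ αᵢ = 1`, the two triple products
`u`, `v` of any split satisfy `u² = 1` and `u v = 1`, hence `u = v`.
-/

open Equiv

section TripleBalanced

variable {R : Type*} [CommRing R]

def TripleBalanced (α : Fin 6 → R) : Prop :=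
  ∀ σ : Perm (Fin 6), α (σ 0) * α (σ 1) * α (σ 2) = α (σ 3) * α (σ 4) * α (σ 5)

theorem exists_perm_apply_zero_apply_three {i j : Fin 6} (hij : i ≠ j) :
    ∃ σ : Perm (Fin 6), σ 0 = i ∧ σ 3 = j := by
  have hj : swap 0 i j ≠ 0 := by
    rw [Ne, swap_apply_eq_iff, swap_apply_left]
    exact hij.symm
  refine ⟨swap 0 i * swap 3 (swap 0 i j), ?_, by simp⟩
  rw [Perm.mul_apply, swap_apply_of_ne_of_ne (by decide) hj.symm, swap_apply_left]

theorem sq_eq_sq_of_mul_eq_mul_of_swap [IsDomain R] {x y a b c d : R}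
    (h : x * a * b = y * c * d) (h' : y * a * b = x * c * d) (hne : a * b * c * d ≠ 0) :
    x ^ 2 = y ^ 2 := by
  apply mul_right_cancel₀ hne
  linear_combination (x * c * d) * h - (y * c * d) * h'

variable [IsDomain R] {α : Fin 6 → R}

theorem TripleBalanced.sq_eq_sq (h : TripleBalanced α) (hα : ∀ i, α i ≠ 0) (i j : Fin 6) :
    α i ^ 2 = α j ^ 2 := by
  rcases eq_or_ne i j with rfl | hij
  · rfl
  obtain ⟨σ, rfl, rfl⟩ := exists_perm_apply_zero_apply_three hij
  have h' := h (σ * swap 0 3)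
  simp only [Perm.mul_apply, swap_apply_left, swap_apply_right, swap_apply_of_ne_of_ne,
    ne_eq, Fin.reduceEq, not_false_eq_true] at h'
  exact sq_eq_sq_of_mul_eq_mul_of_swap (h σ) h' (by simp [hα])

theorem tripleBalanced_mul_const_iff {c : R} (hc : c ≠ 0) :
    TripleBalanced (fun i => α i * c) ↔ TripleBalanced α := by
  refine forall_congr' fun σ => ⟨fun h => ?_, fun h => by linear_combination c ^ 3 * h⟩
  apply mul_right_cancel₀ (pow_ne_zero 3 hc)
  linear_combination h

theorem tripleBalanced_iff_of_apply_zero_eq_one (hα : ∀ i, α i ≠ 0) (h0 : α 0 = 1) :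
    TripleBalanced α ↔ (∀ i, α i ^ 2 = 1) ∧ ∏ i, α i = 1 := by
  constructor
  · intro h
    have hsq (i : Fin 6) : α i ^ 2 = 1 := by rw [h.sq_eq_sq hα i 0, h0, one_pow]
    have h1 : α 0 * α 1 * α 2 = α 3 * α 4 * α 5 := h 1
    refine ⟨hsq, ?_⟩
    rw [Fin.prod_univ_six]
    linear_combination (-(α 0 * α 1 * α 2)) * h1 + (α 1 ^ 2 * α 2 ^ 2) * hsq 0 +
      α 2 ^ 2 * hsq 1 + hsq 2
  · rintro ⟨hsq, hprod⟩ σ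
    set u := α (σ 0) * α (σ 1) * α (σ 2)
    set v := α (σ 3) * α (σ 4) * α (σ 5)
    have huv : u * v = 1 := by
      rw [← hprod, ← Equiv.prod_comp σ, Fin.prod_univ_six]
      ring
    have hu : u ^ 2 = 1 := by simp only [u, mul_pow, hsq, one_mul]
    linear_combination v * hu - u * huv

end TripleBalanced

/-- For nonzero α₁,…,α₆ in a field F, the condition
α_{σ(1)}α_{σ(2)}α_{σ(3)} = α_{σ(4)}α_{σ(5)}α_{σ(6)} for all permutations σ is
equivalent to: (α_i/α₁)² = 1 for all i and ∏ᵢ (α_i/α₁) = 1. -/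
theorem stmt_6 (F : Type*) [Field F] (α : Fin 6 → F) (hα : ∀ i, α i ≠ 0) :
    (∀ σ : Equiv.Perm (Fin 6),
      α (σ 0) * α (σ 1) * α (σ 2) = α (σ 3) * α (σ 4) * α (σ 5))
    ↔ ((∀ i, (α i * (α 0)⁻¹) ^ 2 = 1) ∧ ∏ i, (α i * (α 0)⁻¹) = 1) := by
  have h0 : (α 0)⁻¹ ≠ 0 := inv_ne_zero (hα 0)
  rw [← tripleBalanced_iff_of_apply_zero_eq_one (fun i => mul_ne_zero (hα i) h0)
    (mul_inv_cancel₀ (hα 0)), tripleBalanced_mul_const_iff h0]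
  rfl
end

section
/- Let C be the 4×4 matrix over ℤ/2ℤ with all diagonal entries 0 and all off-diagonal entries 1, and let SP₄(ℤ₂) = {A ∈ M₄(ℤ/2ℤ) : A·C·Aᵗ = C}. Define κ₀ : (ℤ/2ℤ)⁴ → ℤ/2ℤ by κ₀(v) = 1 if v has at least three nonzero entries and κ₀(v) = 0 otherwise, and for A ∈ SP₄(ℤ₂) let κ(A) ∈ (ℤ/2ℤ)⁴ be the column vector whose i-th entry is κ₀ of the i-th row of A. Then for all A, B ∈ SP₄(ℤ₂) one has κ(A·B) = A·κ(B) + κ(A). -/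
/-!
Up to a correction term, `kappa0` is a quadratic form polarizing to the symplectic form
`u ⬝ᵥ spForm *ᵥ v`: the defect `κ₀(u + v) - κ₀ u - κ₀ v` depends only on that pairing and on
which of `u`, `v`, `u + v` vanish. A symplectic `B` preserves both, so `a ↦ κ₀(a B) - κ₀ a` is
additive, hence `ZMod 2`-linear; on the standard basis it takes the values `κ₀(B k)` because
`κ₀` vanishes on basis vectors. Applied to the rows of `A` this is the cocycle identity.
-/

open Matrix

def spForm : Matrix (Fin 4) (Fin 4) (ZMod 2) :=
  Matrix.of fun i j => if i = j then 0 else 1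

def kappa0 (v : Fin 4 → ZMod 2) : ZMod 2 :=
  if 3 ≤ (Finset.univ.filter fun i => v i ≠ 0).card then 1 else 0

def kappa (A : Matrix (Fin 4) (Fin 4) (ZMod 2)) : Fin 4 → ZMod 2 :=
  fun i => kappa0 (A i)

theorem comp_sub_self_add_of_polar_invariant {V W : Type*} [Add V] [AddCommGroup W]
    (f : V → W) (g : V → V → W) (φ : V →ₙ+ V)
    (hf : ∀ u v, f (u + v) = f u + f v + g u v) (hg : ∀ u v, g (φ u) (φ v) = g u v)
    (u v : V) :
    f (φ (u + v)) - f (u + v) = (f (φ u) - f u) + (f (φ v) - f v) := by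
  rw [map_add, hf, hf, hg]
  abel

namespace Matrix

variable {n R : Type*} [Fintype n]

theorem vecMul_dotProduct_mulVec_vecMul [CommSemiring R] (B J : Matrix n n R) (u v : n → R) :
    (u ᵥ* B) ⬝ᵥ J *ᵥ (v ᵥ* B) = u ⬝ᵥ (B * J * Bᵀ) *ᵥ v := by
  rw [← mulVec_transpose B v, mulVec_mulVec, dotProduct_mulVec, vecMul_vecMul,
    ← Matrix.mul_assoc, ← dotProduct_mulVec]

theorem isUnit_of_mul_mul_transpose_eq [CommRing R] [DecidableEq n] {B J : Matrix n n R}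
    (hJ : IsUnit J) (hB : B * J * Bᵀ = J) : IsUnit B := by
  have hJdet : IsUnit J.det := (isUnit_iff_isUnit_det J).mp hJ
  refine isUnit_iff_exists_inv.mpr ⟨J * Bᵀ * J⁻¹, ?_⟩
  rw [← Matrix.mul_assoc, ← Matrix.mul_assoc, hB, mul_nonsing_inv J hJdet]

end Matrix

theorem isUnit_spForm : IsUnit spForm :=
  IsUnit.of_mul_eq_one spForm (by decide)

theorem kappa0_add (u v : Fin 4 → ZMod 2) :
    kappa0 (u + v) = kappa0 u + kappa0 v +
      if u ≠ 0 ∧ v ≠ 0 ∧ u + v ≠ 0 then u ⬝ᵥ spForm *ᵥ v + 1 else 0 := by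
  revert u v
  decide

theorem kappa0_single_one (i : Fin 4) : kappa0 (Pi.single i 1) = 0 := by
  fin_cases i <;> decide

theorem kappa0_vecMul_sub_kappa0 {B : Matrix (Fin 4) (Fin 4) (ZMod 2)}
    (hB : B * spForm * Bᵀ = spForm) (a : Fin 4 → ZMod 2) :
    kappa0 (a ᵥ* B) - kappa0 a = ∑ k, a k * kappa0 (B k) := by
  have hinj := vecMul_injective_of_isUnit (isUnit_of_mul_mul_transpose_eq isUnit_spForm hB)
  have hzero (w : Fin 4 → ZMod 2) : w ᵥ* B = 0 ↔ w = 0 := hinj.eq_iff' (zero_vecMul B)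
  let D : (Fin 4 → ZMod 2) →+ ZMod 2 :=
    AddMonoidHom.mk' (fun v => kappa0 (v ᵥ* B) - kappa0 v)
      (comp_sub_self_add_of_polar_invariant kappa0 _ ⟨(· ᵥ* B), (add_vecMul B · ·)⟩ kappa0_add
        fun u v => by
          simp only [AddHom.coe_mk, ← add_vecMul, ne_eq, hzero, vecMul_dotProduct_mulVec_vecMul,
            hB])
  have hbasis (i : Fin 4) : (fun j => if i = j then (1 : ZMod 2) else 0) = Pi.single i 1 := by
    funext j
    simp [Pi.single_apply, eq_comm]
  simpa [D, hbasis, single_one_vecMul, Matrix.row, kappa0_single_one] using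
    LinearMap.pi_apply_eq_sum_univ (D.toZModLinearMap 2) a

theorem stmt_9_general (A B : Matrix (Fin 4) (Fin 4) (ZMod 2))
    (hB : B * spForm * Bᵀ = spForm) :
    kappa (A * B) = A.mulVec (kappa B) + kappa A := by
  funext i
  show kappa0 (A i ᵥ* B) = (A *ᵥ kappa B) i + kappa0 (A i)
  rw [← sub_eq_iff_eq_add, kappa0_vecMul_sub_kappa0 hB]
  rfl

/-- For A, B ∈ SP₄(ℤ₂) (matrices with A·C·Aᵗ = C), κ(A·B) = A·κ(B) + κ(A). -/
theorem stmt_9 (A B : Matrix (Fin 4) (Fin 4) (ZMod 2))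
    (hA : A * spForm * Aᵀ = spForm) (hB : B * spForm * Bᵀ = spForm) :
    kappa (A * B) = A.mulVec (kappa B) + kappa A :=
  stmt_9_general A B hB
end

section
/- Let F be a field of characteristic different from 2. For 1 ≤ i < j ≤ 6, let f_{ij} be the 6×6 diagonal matrix over F whose (i,i) and (j,j) entries equal −1 and whose other diagonal entries equal 1. Suppose X ∈ GL₆(F) satisfies that X·f_{ij}·X⁻¹ is a diagonal matrix with all diagonal entries in {1, −1} for every 1 ≤ i < j ≤ 6. Then X is a monomial matrix: there exist a permutation σ of {1,…,6} and nonzero scalars a₁,…,a₆ ∈ F such that X = diag(a₁,…,a₆)·P_σ, where P_σ is the permutation matrix with (i, σ(i)) entry equal to 1 for all i and 0 elsewhere. -/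
/-!
Comparing the `(k, l)` entries of `X * diagonal e = diagonal d * X` gives `e l = d k` whenever
`X k l ≠ 0`, so `e` is constant on the support of each row of `X`. Since the `f_{ij}` separate any
two indices (there is a third index to pair with), every row of `X` has a single nonzero entry;
invertibility makes the resulting column map injective, hence a permutation.
-/

namespace Matrix

theorem mul_apply_eq_of_forall_ne_eq_zero {l m o α : Type*} [Fintype m]
    [NonUnitalNonAssocSemiring α] {M : Matrix l m α} {N : Matrix m o α} {i : l} {j : m}
    (h : ∀ j', j' ≠ j → M i j' = 0) (k : o) : (M * N) i k = M i j * N j k := by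
  rw [mul_apply]
  exact Finset.sum_eq_single j (fun j' _ hj' => by rw [h j' hj', zero_mul]) (by simp)

variable {n R : Type*} [Fintype n] [DecidableEq n] [CommRing R] [IsDomain R]

theorem eq_of_mul_diagonal_eq_diagonal_mul {M : Matrix n n R} {e d : n → R}
    (h : M * diagonal e = diagonal d * M) {k l l' : n} (hl : M k l ≠ 0) (hl' : M k l' ≠ 0) :
    e l = e l' := by
  have entry : ∀ m, M k m ≠ 0 → e m = d k := fun m hm => by
    have := congrFun (congrFun h k) m
    rw [mul_diagonal, diagonal_mul, mul_comm] at this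
    exact mul_right_cancel₀ hm this
  rw [entry l hl, entry l' hl']

theorem GeneralLinearGroup.exists_ne_zero_apply (X : GL n R) (k : n) :
    ∃ l, (X : Matrix n n R) k l ≠ 0 := by
  by_contra! h
  exact ((isUnit_iff_isUnit_det _).mp X.isUnit).ne_zero (det_eq_zero_of_row_eq_zero k h)

theorem GeneralLinearGroup.exists_perm_of_separating (X : GL n R)
    (hsep : ∀ l l', l ≠ l' → ∃ e d : n → R, e l ≠ e l' ∧
      (X : Matrix n n R) * diagonal e = diagonal d * X) :
    ∃ (σ : Equiv.Perm n) (a : n → R), (∀ i, a i ≠ 0) ∧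
      (X : Matrix n n R) = diagonal a * of (fun i j => if σ i = j then (1 : R) else 0) := by
  choose c hc using X.exists_ne_zero_apply
  have hrow : ∀ k l, l ≠ c k → (X : Matrix n n R) k l = 0 := fun k l hl => by
    by_contra hXkl
    obtain ⟨e, d, he, hd⟩ := hsep l (c k) hl
    exact he (eq_of_mul_diagonal_eq_diagonal_mul hd hXkl (hc k))
  have hinv : ∀ k k', ((X * X⁻¹ : GL n R) : Matrix n n R) k k' =
      (X : Matrix n n R) k (c k) * (X⁻¹ : GL n R) (c k) k' :=
    fun k => mul_apply_eq_of_forall_ne_eq_zero (hrow k)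
  have hc_inj : Function.Injective c := fun k k' hkk' => by
    by_contra hne
    have hzero := hinv k k'
    have hone := hinv k' k'
    rw [mul_inv_cancel, Units.val_one, one_apply_ne hne, hkk'] at hzero
    rw [mul_inv_cancel, Units.val_one, one_apply_eq] at hone
    rcases mul_eq_zero.mp hzero.symm with h | h
    · exact hc k (hkk' ▸ h)
    · rw [h, mul_zero] at hone
      exact one_ne_zero hone
  refine ⟨Equiv.ofBijective c hc_inj.bijective_of_finite, fun k => X k (c k), hc, ?_⟩
  ext k l
  rw [diagonal_mul, of_apply, Equiv.ofBijective_apply]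
  by_cases hl : c k = l
  · rw [if_pos hl, mul_one, hl]
  · rw [if_neg hl, mul_zero, hrow k l (Ne.symm hl)]

end Matrix

/-- Over a field of characteristic ≠ 2, if X ∈ GL₆(F) conjugates every f_{ij}
(diagonal with −1 at places i < j and 1 elsewhere) into a ±1-diagonal matrix, then X
is monomial: X = diag(a₁,…,a₆)·P_σ for a permutation σ and nonzero scalars aᵢ. -/
theorem stmt_13 (F : Type*) [Field F] (hF : ringChar F ≠ 2) (X : GL (Fin 6) F)
    (hX : ∀ i j : Fin 6, i < j → ∃ d : Fin 6 → F, (∀ k, d k = 1 ∨ d k = -1) ∧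
      (X : Matrix (Fin 6) (Fin 6) F)
          * Matrix.diagonal (fun k => if k = i ∨ k = j then (-1 : F) else 1)
          * ((X⁻¹ : GL (Fin 6) F) : Matrix (Fin 6) (Fin 6) F)
        = Matrix.diagonal d) :
    ∃ (σ : Equiv.Perm (Fin 6)) (a : Fin 6 → F), (∀ i, a i ≠ 0) ∧
      (X : Matrix (Fin 6) (Fin 6) F)
        = Matrix.diagonal a * Matrix.of (fun i j => if σ i = j then (1 : F) else 0) := by
  have hsign : (-1 : F) ≠ 1 := fun h => hF (neg_one_eq_one_iff.mp h)
  have hconj : ∀ i j : Fin 6, i ≠ j → ∃ d : Fin 6 → F, (X : Matrix (Fin 6) (Fin 6) F) *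
      Matrix.diagonal (fun k => if k = i ∨ k = j then (-1 : F) else 1) = Matrix.diagonal d * X := by
    intro i j hij
    rcases hij.lt_or_gt with h | h
    · obtain ⟨d, -, hd⟩ := hX i j h
      exact ⟨d, (Units.mul_inv_eq_iff_eq_mul X).mp hd⟩
    · obtain ⟨d, -, hd⟩ := hX j i h
      simp_rw [or_comm (a := _ = i)]
      exact ⟨d, (Units.mul_inv_eq_iff_eq_mul X).mp hd⟩
  refine X.exists_perm_of_separating fun l l' hll' => ?_
  obtain ⟨j, hjl, hjl'⟩ : ∃ j : Fin 6, j ≠ l ∧ j ≠ l' := by revert l l'; decide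
  obtain ⟨d, hd⟩ := hconj l j hjl.symm
  exact ⟨_, d, by simpa [hll'.symm, hjl'.symm] using hsign, hd⟩
end

section
/- Consider the matrices in GL₄(ℤ): s₁ = [[0,−1,1,−1],[1,−1,1,0],[0,0,1,0],[0,0,0,1]], s₂ = [[−1,1,0,−1],[0,1,0,0],[0,0,1,0],[0,0,0,1]], s₃ = [[0,0,1,−1],[0,1,0,0],[1,0,0,1],[0,0,0,1]], s₄ = [[1,0,−1,1],[0,1,−1,0],[0,0,0,−1],[0,0,1,−1]]. For every matrix M in the subgroup of GL₄(ℤ) generated by {s₁, s₂, s₃, s₄} and for all a, b ∈ ℤ/2ℤ, there exist a′, b′ ∈ ℤ/2ℤ such that the row vector (a, b, a, b) multiplied on the right by the mod-2 reduction of M equals the row vector (a′, b′, a′, b′). -/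
/-!
Over a finite ring, the invertible matrices whose right action maps a given set of row vectors
into itself form a subgroup: an injective self-map of a finite set is onto, so the inverse maps
the set into itself as well. Pulling this subgroup of `GL₄(𝔽₂)` back along reduction mod 2 gives
a subgroup of `GL₄(ℤ)`, and checking the four generators against it is a finite computation.
-/

open Matrix

namespace Matrix.GeneralLinearGroup

variable {n K : Type*} [Fintype n] [DecidableEq n] [CommRing K] [Finite K]

def vecMulStabilizer (S : Set (n → K)) : Subgroup (GL n K) where
  carrier := {M | Set.MapsTo (fun v => v ᵥ* (M : Matrix n n K)) S S}
  one_mem' _ hv := by simpa using hv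
  mul_mem' hM hN _ hv := by simpa [vecMul_vecMul] using hN (hM hv)
  inv_mem' {M} hM := by
    have hinj : Function.Injective fun v => v ᵥ* (M : Matrix n n K) := fun v w h => by
      simpa [vecMul_vecMul] using congrArg (· ᵥ* (M⁻¹ : GL n K).val) h
    obtain ⟨-, -, hsurj⟩ := (S.toFinite.injOn_iff_bijOn_of_mapsTo hM).1 hinj.injOn
    rintro v hv
    obtain ⟨w, hw, rfl⟩ := hsurj hv
    simpa [vecMul_vecMul] using hw

theorem mem_vecMulStabilizer_iff {S : Set (n → K)} {M : GL n K} :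
    M ∈ vecMulStabilizer S ↔ ∀ v ∈ S, v ᵥ* (M : Matrix n n K) ∈ S := Iff.rfl

end Matrix.GeneralLinearGroup

def repeatedPairs : Set (Fin 4 → ZMod 2) :=
  Set.range fun ab : ZMod 2 × ZMod 2 => ![ab.1, ab.2, ab.1, ab.2]

open Matrix.GeneralLinearGroup in
theorem mem_comap_vecMulStabilizer_repeatedPairs_iff {M : GL (Fin 4) ℤ} :
    M ∈ (vecMulStabilizer repeatedPairs).comap (map (Int.castRingHom (ZMod 2))) ↔
      ∀ a b : ZMod 2, ∃ a' b' : ZMod 2,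
        ![a, b, a, b] ᵥ* (M : Matrix (Fin 4) (Fin 4) ℤ).map (fun n : ℤ => (n : ZMod 2))
          = ![a', b', a', b'] := by
  rw [Subgroup.mem_comap, mem_vecMulStabilizer_iff, repeatedPairs, Set.forall_mem_range]
  simp only [Set.mem_range, Prod.exists, Prod.forall, val_map_apply, Int.coe_castRingHom, eq_comm]

/-- For every matrix M in the subgroup of GL₄(ℤ) generated by s₁, s₂, s₃, s₄ (the Weyl
group of the Cartan grading of f₄) and all a, b ∈ ℤ/2ℤ, the row vector (a,b,a,b)
multiplied by the mod-2 reduction of M is again of the form (a′,b′,a′,b′). -/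
theorem stmt_14 (s₁ s₂ s₃ s₄ : GL (Fin 4) ℤ)
    (h₁ : (s₁ : Matrix (Fin 4) (Fin 4) ℤ) = !![0,-1,1,-1; 1,-1,1,0; 0,0,1,0; 0,0,0,1])
    (h₂ : (s₂ : Matrix (Fin 4) (Fin 4) ℤ) = !![-1,1,0,-1; 0,1,0,0; 0,0,1,0; 0,0,0,1])
    (h₃ : (s₃ : Matrix (Fin 4) (Fin 4) ℤ) = !![0,0,1,-1; 0,1,0,0; 1,0,0,1; 0,0,0,1])
    (h₄ : (s₄ : Matrix (Fin 4) (Fin 4) ℤ) = !![1,0,-1,1; 0,1,-1,0; 0,0,0,-1; 0,0,1,-1]) :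
    ∀ M ∈ (Subgroup.closure {s₁, s₂, s₃, s₄} : Subgroup (GL (Fin 4) ℤ)),
      ∀ a b : ZMod 2, ∃ a' b' : ZMod 2,
        Matrix.vecMul ![a, b, a, b]
            (((M : GL (Fin 4) ℤ) : Matrix (Fin 4) (Fin 4) ℤ).map (fun n : ℤ => (n : ZMod 2)))
          = ![a', b', a', b'] := by
  intro M hM
  refine mem_comap_vecMulStabilizer_repeatedPairs_iff.1 ((Subgroup.closure_le _).2 ?_ hM)
  simp only [Set.insert_subset_iff, Set.singleton_subset_iff, SetLike.mem_coe,
    mem_comap_vecMulStabilizer_repeatedPairs_iff, h₁, h₂, h₃, h₄]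
  decide
end
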